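/- arXiv:1407.1966 — 5 statements merged into one kernel-verified Lean document; each statement's English description precedes it below -/
import Mathlib

section
/- Let G be a finite abelian group and W ⊆ ℤ a nonempty set of weights. If d < e_W(G) then s_{W,≤d}(G) = ∞ (i.e., for every n there is a sequence over G of length n with no W-weighted zero-subsum of length at most d), and if d ≥ e_W(G) then s_{W,≤d}(G) ≤ (e_W(G)−1)·|G| + 1. -/
open scoped BigOperators

/-- `l` encodes a `W`-weighted zero-subsum of the sequence (multiset) `S`:
a nonempty list of (weight, group element) pairs with weights in `W`, whose
group elements form a sub-multiset of `S` and whose weighted sum is zero. -/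
def IsWZeroSubsum {G : Type*} [AddCommGroup G] (W : Set ℤ) (S : Multiset G)
    (l : List (ℤ × G)) : Prop :=
  l ≠ [] ∧ (∀ p ∈ l, p.1 ∈ W) ∧ (↑(l.map Prod.snd) : Multiset G) ≤ S ∧
    (l.map fun p => p.1 • p.2).sum = 0

/-- `S` has a `W`-weighted zero-subsum whose length lies in `L`. -/
def HasWZeroSubsumLen {G : Type*} [AddCommGroup G] (W : Set ℤ) (S : Multiset G)
    (L : Set ℕ) : Prop :=
  ∃ l : List (ℤ × G), IsWZeroSubsum W S l ∧ l.length ∈ L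

/-- `S` has `m` pairwise disjoint `W`-weighted zero-subsums. -/
def HasDisjointWZeroSubsums {G : Type*} [AddCommGroup G] (W : Set ℤ) (S : Multiset G)
    (m : ℕ) : Prop :=
  ∃ ls : List (List (ℤ × G)), ls.length = m ∧
    (∀ l ∈ ls, l ≠ [] ∧ (∀ p ∈ l, p.1 ∈ W) ∧ (l.map fun p => p.1 • p.2).sum = 0) ∧
    (↑(ls.flatten.map Prod.snd) : Multiset G) ≤ S

/-- The `m`-wise `W`-weighted Davenport constant `D_{W,m}(G)`. -/
noncomputable def DW (W : Set ℤ) (G : Type*) [AddCommGroup G] (m : ℕ) : ℕ :=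
  sInf {n : ℕ | ∀ S : Multiset G, n ≤ Multiset.card S → HasDisjointWZeroSubsums W S m}

/-- The `L`-constrained `W`-weighted Davenport constant `s_{W,L}(G)`, valued in `ℕ∞`. -/
noncomputable def sWL (W : Set ℤ) (G : Type*) [AddCommGroup G] (L : Set ℕ) : ℕ∞ :=
  sInf {N : ℕ∞ | ∃ n : ℕ, N = (n : ℕ∞) ∧
    ∀ S : Multiset G, n ≤ Multiset.card S → HasWZeroSubsumLen W S L}

/-- The `d`-constrained `W`-weighted Davenport constant `s_{W,≤d}(G)`. -/
noncomputable def sWle (W : Set ℤ) (G : Type*) [AddCommGroup G] (d : ℕ) : ℕ∞ :=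
  sWL W G {t | 1 ≤ t ∧ t ≤ d}

/-- `e_W(G)`: the smallest `t ≥ 1` such that some `t` weights from `W` sum to a
multiple of `exp(G)`. -/
noncomputable def eW (W : Set ℤ) (G : Type*) [AddCommGroup G] : ℕ :=
  sInf {t : ℕ | 1 ≤ t ∧ ∃ w : Fin t → ℤ, (∀ i, w i ∈ W) ∧
    ((AddMonoid.exponent G : ℤ) ∣ ∑ i, w i)}

/-- `W` is multiplicatively closed modulo `n`. -/
def MulClosedMod (W : Set ℤ) (n : ℕ) : Prop :=
  ∀ w ∈ W, ∀ w' ∈ W, ∃ u ∈ W, (n : ℤ) ∣ w * w' - u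


/-!
Both bounds come from sequences concentrated on a single element. If `g` has order `exp(G)`,
a weighted zero-subsum of `gⁿ` with weights `w₁, …, w_t` forces `exp(G) ∣ w₁ + ⋯ + w_t`, so it
has length at least `e_W(G)`; hence `s_{W,≤d}(G) = ∞` for `d < e_W(G)`. Conversely, a sequence
of length `(e_W(G) - 1)|G| + 1` contains some `g` at least `e_W(G)` times by pigeonhole, and the
`e_W(G)` weights realising `e_W(G)` turn these copies into a zero-subsum, since `exp(G) • g = 0`.
-/

open AddMonoid

section Davenport

variable {G : Type*} [AddCommGroup G]

lemma sWL_eq_top {W : Set ℤ} {L : Set ℕ}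
    (h : ∀ n : ℕ, ∃ S : Multiset G, n ≤ Multiset.card S ∧ ¬HasWZeroSubsumLen W S L) :
    sWL W G L = ⊤ := by
  rw [sWL, sInf_eq_top]
  rintro _ ⟨n, -, hn⟩
  obtain ⟨S, hS, hno⟩ := h n
  exact (hno (hn S hS)).elim

lemma sWL_le {W : Set ℤ} {L : Set ℕ} {n : ℕ}
    (h : ∀ S : Multiset G, n ≤ Multiset.card S → HasWZeroSubsumLen W S L) :
    sWL W G L ≤ n :=
  sInf_le ⟨n, rfl, h⟩

lemma eW_le_length {W : Set ℤ} {ws : List ℤ} (hne : ws ≠ []) (hW : ∀ w ∈ ws, w ∈ W)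
    (hdvd : (exponent G : ℤ) ∣ ws.sum) : eW W G ≤ ws.length := by
  refine Nat.sInf_le ⟨List.length_pos_iff.mpr hne, ws.get, fun i => hW _ (ws.get_mem i), ?_⟩
  rwa [← List.sum_ofFn, List.ofFn_get]

lemma eW_spec [Finite G] {W : Set ℤ} (hW : W.Nonempty) :
    1 ≤ eW W G ∧ ∃ w : Fin (eW W G) → ℤ, (∀ i, w i ∈ W) ∧ (exponent G : ℤ) ∣ ∑ i, w i := by
  obtain ⟨w₀, hw₀⟩ := hW
  apply Nat.sInf_mem (s := {t : ℕ | 1 ≤ t ∧ ∃ w : Fin t → ℤ, (∀ i, w i ∈ W) ∧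
    ((exponent G : ℤ) ∣ ∑ i, w i)})
  refine ⟨exponent G, ExponentExists.of_finite.exponent_pos, fun _ => w₀, fun _ => hw₀, ?_⟩
  simp [Finset.sum_const]

lemma weightedSum_eq_sum_fst_smul {l : List (ℤ × G)} {g : G} (h : ∀ p ∈ l, p.2 = g) :
    (l.map fun p => p.1 • p.2).sum = (l.map Prod.fst).sum • g := by
  rw [List.sum_smul, List.map_map]
  exact congrArg List.sum (List.map_congr_left fun p hp => by simp [h p hp])

lemma eW_le_length_of_isWZeroSubsum_replicate {W : Set ℤ} {n : ℕ} {g : G}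
    (hg : addOrderOf g = exponent G) {l : List (ℤ × G)}
    (hl : IsWZeroSubsum W (Multiset.replicate n g) l) : eW W G ≤ l.length := by
  obtain ⟨hne, hlW, hsub, hsum⟩ := hl
  have hconst : ∀ p ∈ l, p.2 = g := fun p hp =>
    Multiset.eq_of_mem_replicate (Multiset.mem_of_le hsub (by simpa using ⟨p.1, hp⟩))
  rw [weightedSum_eq_sum_fst_smul hconst, ← addOrderOf_dvd_iff_zsmul_eq_zero, hg] at hsum
  simpa using eW_le_length (W := W) (by simpa using hne) (by simpa using hlW) hsum

lemma isWZeroSubsum_ofFn_of_le_count [DecidableEq G] {W : Set ℤ} {S : Multiset G} {g : G}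
    {t : ℕ} (ht : 1 ≤ t) (w : Fin t → ℤ) (hwW : ∀ i, w i ∈ W) (hdvd : (exponent G : ℤ) ∣ ∑ i, w i)
    (hcount : t ≤ S.count g) :
    IsWZeroSubsum W S (List.ofFn fun i => (w i, g)) := by
  refine ⟨by simpa [List.ofFn_eq_nil_iff] using Nat.one_le_iff_ne_zero.mp ht, ?_, ?_, ?_⟩
  · simpa using hwW
  · simpa [List.map_ofFn, Function.comp_def, ← Multiset.coe_replicate] using
      Multiset.le_count_iff_replicate_le.mp hcount
  · obtain ⟨k, hk⟩ := hdvd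
    rw [List.map_ofFn, List.sum_ofFn]
    simp only [Function.comp_apply, ← Finset.sum_smul, hk, mul_smul, natCast_zsmul,
      exponent_nsmul_eq_zero]

lemma Multiset.exists_le_count_of_card {α : Type*} [Fintype α] [DecidableEq α]
    {S : Multiset α} {k : ℕ} (hS : (k - 1) * Fintype.card α + 1 ≤ Multiset.card S) :
    ∃ a, k ≤ S.count a := by
  have hlt : ∑ _a : α, (k - 1) < ∑ a, S.count a := by
    rw [Multiset.sum_count_eq_card (fun a _ => Finset.mem_univ a), Finset.sum_const,
      Finset.card_univ, smul_eq_mul]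
    lia
  obtain ⟨a, -, ha⟩ := Finset.exists_lt_of_sum_lt hlt
  exact ⟨a, by lia⟩

end Davenport

/-- `s_{W,≤d}(G) = ∞` for `d < e_W(G)` and
`s_{W,≤d}(G) ≤ (e_W(G)-1)|G| + 1` for `d ≥ e_W(G)`. -/
theorem stmt1 {G : Type*} [AddCommGroup G] [Fintype G] (W : Set ℤ) (hW : W.Nonempty)
    (d : ℕ) :
    (d < eW W G → sWle W G d = ⊤) ∧
    (eW W G ≤ d → sWle W G d ≤ (((eW W G - 1) * Fintype.card G + 1 : ℕ) : ℕ∞)) := by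
  classical
  constructor
  · intro hd
    obtain ⟨g, hg⟩ := exists_addOrderOf_eq_exponent (ExponentExists.of_finite (G := G))
    refine sWL_eq_top fun n => ⟨Multiset.replicate n g, by simp, ?_⟩
    rintro ⟨l, hl, -, hld⟩
    have := eW_le_length_of_isWZeroSubsum_replicate hg hl
    lia
  · intro hd
    obtain ⟨he, w, hwW, hdvd⟩ := eW_spec (G := G) hW
    refine sWL_le fun S hS => ?_
    obtain ⟨g, hg⟩ := Multiset.exists_le_count_of_card hS
    exact ⟨List.ofFn fun i => (w i, g), isWZeroSubsum_ofFn_of_le_count he w hwW hdvd hg,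
      by simpa using ⟨he, hd⟩⟩
end

section
/- Let G be a finite abelian group, W ⊆ ℤ a nonempty set of weights, and m ∈ ℕ. Then D_{W,m+1}(G) ≤ min over all d ∈ ℕ of max{ D_{W,m}(G) + d , s_{W,≤d}(G) } (where terms with s_{W,≤d}(G) = ∞ are discarded, i.e., the inequality holds for every d with s_{W,≤d}(G) finite). -/
open scoped BigOperators

/-! Given a sequence of length at least `max (D_{W,m}(G) + d) s_{W,≤d}(G)`, remove a weighted
zero-subsum of length at most `d`; at least `D_{W,m}(G)` terms remain, and they contain `m`
further disjoint weighted zero-subsums. -/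

section

variable (W : Set ℤ) (G : Type*) [AddCommGroup G]

def ForcesDisjointWZeroSubsums (m n : ℕ) : Prop :=
  ∀ S : Multiset G, n ≤ Multiset.card S → HasDisjointWZeroSubsums W S m

def ForcesShortWZeroSubsum (d n : ℕ) : Prop :=
  ∀ S : Multiset G, n ≤ Multiset.card S → HasWZeroSubsumLen W S {t | 1 ≤ t ∧ t ≤ d}

variable {G}

theorem hasDisjointWZeroSubsums_zero (S : Multiset G) : HasDisjointWZeroSubsums W S 0 :=
  ⟨[], rfl, by simp, by simp⟩

theorem IsWZeroSubsum.hasDisjointWZeroSubsums_succ [DecidableEq G] {S : Multiset G}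
    {l : List (ℤ × G)} (hl : IsWZeroSubsum W S l) {m : ℕ}
    (h : HasDisjointWZeroSubsums W (S - (l.map Prod.snd : Multiset G)) m) :
    HasDisjointWZeroSubsums W S (m + 1) := by
  obtain ⟨hne, hw, hle, hsum⟩ := hl
  obtain ⟨ls, hlen, hls, hsub⟩ := h
  refine ⟨l :: ls, by simp [hlen], ?_, ?_⟩
  · rintro l' hl'
    rcases List.mem_cons.mp hl' with rfl | hl'
    · exact ⟨hne, hw, hsum⟩
    · exact hls l' hl'
  · calc (↑((l :: ls).flatten.map Prod.snd) : Multiset G)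
        = ↑(l.map Prod.snd) + ↑(ls.flatten.map Prod.snd) := by simp
      _ ≤ ↑(l.map Prod.snd) + (S - (l.map Prod.snd : Multiset G)) := add_le_add_right hsub _
      _ = S := add_tsub_cancel_of_le hle

theorem ForcesShortWZeroSubsum.forcesDisjointWZeroSubsums_succ {d n k m : ℕ}
    (hs : ForcesShortWZeroSubsum W G d n) (hk : ForcesDisjointWZeroSubsums W G m k) :
    ForcesDisjointWZeroSubsums W G (m + 1) (max (k + d) n) := by
  classical
  intro S hS
  obtain ⟨l, hl, -, hld⟩ := hs S (le_of_max_le_right hS)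
  have hsub : (l.map Prod.snd : Multiset G) ≤ S := hl.2.2.1
  have hcard : Multiset.card (l.map Prod.snd : Multiset G) = l.length := by simp
  have hrest : k ≤ Multiset.card (S - (l.map Prod.snd : Multiset G)) := by
    have hlS := hcard ▸ Multiset.card_le_card hsub
    rw [Multiset.card_sub hsub, hcard]
    omega
  exact hl.hasDisjointWZeroSubsums_succ W (hk _ hrest)

theorem ForcesShortWZeroSubsum.exists_forcesDisjointWZeroSubsums {d n : ℕ}
    (hs : ForcesShortWZeroSubsum W G d n) (m : ℕ) :
    ∃ k, ForcesDisjointWZeroSubsums W G m k := by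
  induction m with
  | zero => exact ⟨0, fun S _ => hasDisjointWZeroSubsums_zero W S⟩
  | succ m ih =>
    obtain ⟨k, hk⟩ := ih
    exact ⟨_, hs.forcesDisjointWZeroSubsums_succ W hk⟩

theorem exists_forcesShortWZeroSubsum_eq_sWle {d : ℕ} (h : sWle W G d ≠ ⊤) :
    ∃ n, ForcesShortWZeroSubsum W G d n ∧ sWle W G d = n := by
  have hdef : sWle W G d = sInf {N : ℕ∞ | ∃ n : ℕ, N = n ∧ ForcesShortWZeroSubsum W G d n} := rfl
  have hne : {N : ℕ∞ | ∃ n : ℕ, N = n ∧ ForcesShortWZeroSubsum W G d n}.Nonempty := by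
    by_contra hempty
    exact h (by rw [hdef, Set.not_nonempty_iff_eq_empty.mp hempty, sInf_empty])
  obtain ⟨n, hn, hs⟩ := csInf_mem hne
  exact ⟨n, hs, hn⟩

end

theorem stmt4_general {G : Type*} [AddCommGroup G] (W : Set ℤ)
    (m : ℕ) :
    ∀ d : ℕ, 1 ≤ d →
      ((DW W G (m + 1) : ℕ) : ℕ∞) ≤ max ((DW W G m + d : ℕ) : ℕ∞) (sWle W G d) := by
  intro d _
  rcases eq_or_ne (sWle W G d) ⊤ with htop | htop
  · simp [htop]
  obtain ⟨n, hs, hn⟩ := exists_forcesShortWZeroSubsum_eq_sWle W htop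
  have hm : ForcesDisjointWZeroSubsums W G m (DW W G m) :=
    Nat.sInf_mem (hs.exists_forcesDisjointWZeroSubsums W m)
  have hle : DW W G (m + 1) ≤ max (DW W G m + d) n :=
    Nat.sInf_le (hs.forcesDisjointWZeroSubsums_succ W hm)
  rw [hn, ← Nat.mono_cast.map_max]
  exact_mod_cast hle

/-- `D_{W,m+1}(G) ≤ max{D_{W,m}(G) + d, s_{W,≤d}(G)}` for every `d ∈ ℕ`
(the inequality in `ℕ∞` automatically discards the terms with `s_{W,≤d}(G) = ∞`). -/
theorem stmt4 {G : Type*} [AddCommGroup G] [Fintype G] (W : Set ℤ) (hW : W.Nonempty)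
    (m : ℕ) :
    ∀ d : ℕ, 1 ≤ d →
      ((DW W G (m + 1) : ℕ) : ℕ∞) ≤ max ((DW W G m + d : ℕ) : ℕ∞) (sWle W G d) :=
  stmt4_general W m
end

section
/- Let G be a finite abelian group, W ⊆ ℤ a nonempty set of weights, H a subgroup of G, and let m, m₁, m₂ ∈ ℕ with m ≥ m₁ + m₂ − 1. Then D_{W,m}(G) ≥ D_{W,m₁}(H) + D_{W,m₂}(G/H) − 1. -/
open scoped BigOperators

/-!
Take sequences `S₁` over `H` and `S₂` over `G ⧸ H` of lengths `D_{W,m₁}(H) - 1` and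
`D_{W,m₂}(G/H) - 1` without `m₁`, resp. `m₂`, disjoint zero-subsums, and concatenate `S₁`
with a lift `T` of `S₂`. Among disjoint zero-subsums of `S₁T`, those lying in `H` live on
`S₁Z`, where `Z` is the part of `T` lifting the `c` zeros of `S₂`; discarding the at most `c`
of them that meet `Z` leaves fewer than `m₁`. The others project, after dropping zero terms,
to disjoint zero-subsums of `S₂` avoiding its zeros; with the `c` one-term zero-subsums `0`
there are fewer than `m₂` of them. So `S₁T` has at most `m₁ + m₂ - 2 < m` disjoint
zero-subsums.
-/

namespace WList

variable {G K L : Type*}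

def elems (l : List (ℤ × G)) : Multiset G := ↑(l.map Prod.snd)

def mapElems (φ : G → K) (l : List (ℤ × G)) : List (ℤ × K) := l.map (Prod.map id φ)

theorem elems_mapElems (φ : G → K) (l : List (ℤ × G)) :
    elems (mapElems φ l) = (elems l).map φ := by
  rw [elems, elems, mapElems, Multiset.map_coe, List.map_map, List.map_map]
  rfl

theorem mapElems_mapElems (φ : G → K) (ψ : K → L) (l : List (ℤ × G)) :
    mapElems ψ (mapElems φ l) = mapElems (ψ ∘ φ) l := by
  simp [mapElems, Prod.map_comp_map]

theorem mapElems_eq_self {φ : G → G} {l : List (ℤ × G)} (h : ∀ x ∈ elems l, φ x = x) :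
    mapElems φ l = l :=
  (List.map_congr_left (f := Prod.map id φ) (g := id) fun p hp =>
    Prod.ext rfl (h p.2 (by simpa [elems] using ⟨p.1, hp⟩))).trans (List.map_id l)

theorem elems_filter_ne_zero [Zero G] [DecidableEq G] (l : List (ℤ × G)) :
    elems (l.filter fun p => p.2 ≠ 0) = (elems l).filter (· ≠ 0) := by
  simp [elems, Multiset.filter_coe, List.filter_map, Function.comp_def]

theorem coe_bind_elems (ls : List (List (ℤ × G))) :
    (↑ls : Multiset (List (ℤ × G))).bind elems = ↑(ls.flatten.map Prod.snd) := by
  rw [List.map_flatten, ← Multiset.coe_join, List.map_map]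
  rfl

variable [AddCommGroup G] [AddCommGroup K]

def wsum (l : List (ℤ × G)) : G := (l.map fun p => p.1 • p.2).sum

theorem wsum_mapElems (f : G →+ K) (l : List (ℤ × G)) : wsum (mapElems f l) = f (wsum l) := by
  simp [wsum, mapElems, map_list_sum, Function.comp_def]

theorem wsum_filter_ne_zero [DecidableEq G] (l : List (ℤ × G)) :
    wsum (l.filter fun p => p.2 ≠ 0) = wsum l := by
  induction l with
  | nil => rfl
  | cons p l ih => by_cases hp : p.2 = 0 <;> simp_all [wsum]

end WList

open WList

def IsWZeroSum {G : Type*} [AddCommGroup G] (W : Set ℤ) (l : List (ℤ × G)) : Prop :=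
  l ≠ [] ∧ (∀ p ∈ l, p.1 ∈ W) ∧ wsum l = 0

namespace IsWZeroSum

variable {G K : Type*} [AddCommGroup G] [AddCommGroup K] {W : Set ℤ} {l : List (ℤ × G)}

theorem mapElems (h : IsWZeroSum W l) {φ : G → K} (hφ : wsum (mapElems φ l) = 0) :
    IsWZeroSum W (mapElems φ l) := by
  obtain ⟨hne, hW, -⟩ := h
  refine ⟨by simpa [WList.mapElems] using hne, ?_, hφ⟩
  simp only [WList.mapElems, List.mem_map]
  rintro _ ⟨p, hp, rfl⟩
  exact hW p hp

theorem filter_ne_zero [DecidableEq G] (h : IsWZeroSum W l) (hl : ∃ x ∈ elems l, x ≠ 0) :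
    IsWZeroSum W (l.filter fun p => p.2 ≠ 0) := by
  obtain ⟨-, hW, h0⟩ := h
  obtain ⟨x, hx, hx0⟩ := hl
  obtain ⟨p, hp, rfl⟩ : ∃ p ∈ l, p.2 = x := by simpa [elems] using hx
  refine ⟨List.ne_nil_of_mem (a := p) (by simp [hp, hx0]),
    fun q hq => hW q (List.mem_of_mem_filter hq), ?_⟩
  rw [wsum_filter_ne_zero, h0]

end IsWZeroSum

section Disjoint

variable {G K : Type*} [AddCommGroup G] [AddCommGroup K] {W : Set ℤ} {S : Multiset G} {m n : ℕ}

theorem hasDisjointWZeroSubsums_iff :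
    HasDisjointWZeroSubsums W S m ↔ ∃ B : Multiset (List (ℤ × G)),
      Multiset.card B = m ∧ (∀ l ∈ B, IsWZeroSum W l) ∧ B.bind elems ≤ S := by
  constructor
  · rintro ⟨ls, rfl, hls, hle⟩
    exact ⟨ls, rfl, hls, by rwa [coe_bind_elems]⟩
  · rintro ⟨B, rfl, hB, hle⟩
    obtain ⟨ls, rfl⟩ : ∃ ls : List (List (ℤ × G)), (ls : Multiset _) = B :=
      Quotient.exists_rep B
    exact ⟨ls, rfl, hB, by rwa [← coe_bind_elems]⟩

theorem hasDisjointWZeroSubsums_of_le_card (B : Multiset (List (ℤ × G)))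
    (hm : m ≤ Multiset.card B) (hB : ∀ l ∈ B, IsWZeroSum W l) (hle : B.bind elems ≤ S) :
    HasDisjointWZeroSubsums W S m := by
  obtain ⟨ls, rfl⟩ : ∃ ls : List (List (ℤ × G)), (ls : Multiset _) = B :=
    Quotient.exists_rep B
  refine hasDisjointWZeroSubsums_iff.2 ⟨ls.take m, by simpa using hm,
    fun l hl => hB l (List.take_subset _ _ hl), ?_⟩
  rw [← List.take_append_drop m ls, ← Multiset.coe_add, Multiset.add_bind] at hle
  exact le_self_add.trans hle

theorem HasDisjointWZeroSubsums.of_le (h : HasDisjointWZeroSubsums W S n) (hmn : m ≤ n) :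
    HasDisjointWZeroSubsums W S m := by
  obtain ⟨B, rfl, hB, hle⟩ := hasDisjointWZeroSubsums_iff.1 h
  exact hasDisjointWZeroSubsums_of_le_card B hmn hB hle

theorem lt_of_not_hasDisjointWZeroSubsums (h : ¬ HasDisjointWZeroSubsums W S m)
    (hn : HasDisjointWZeroSubsums W S n) : n < m := by
  by_contra! hmn
  exact h (hn.of_le hmn)

theorem not_hasDisjointWZeroSubsums_zero (hm : 1 ≤ m) :
    ¬ HasDisjointWZeroSubsums W (0 : Multiset G) m := by
  rw [hasDisjointWZeroSubsums_iff]
  rintro ⟨B, rfl, hB, hle⟩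
  obtain ⟨l, hl⟩ := Multiset.card_pos_iff_exists_mem.1 hm
  obtain ⟨p, hp⟩ := List.exists_mem_of_ne_nil l (hB l hl).1
  have : p.2 ∈ B.bind elems :=
    Multiset.mem_bind.2 ⟨l, hl, by simpa [elems] using ⟨p.1, hp⟩⟩
  simp [Multiset.le_zero.1 hle] at this

theorem HasDisjointWZeroSubsums.of_cons {a : G}
    (h : HasDisjointWZeroSubsums W (a ::ₘ S) n) : HasDisjointWZeroSubsums W S (n - 1) := by
  classical
  obtain ⟨B, rfl, hB, hle⟩ := hasDisjointWZeroSubsums_iff.1 h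
  by_cases ha : a ∈ B.bind elems
  · obtain ⟨l, hl, hal⟩ := Multiset.mem_bind.1 ha
    refine hasDisjointWZeroSubsums_of_le_card (B.erase l)
      (by simp [Multiset.card_erase_of_mem hl])
      (fun l' hl' => hB l' (Multiset.mem_of_mem_erase hl')) ?_
    rw [← Multiset.cons_erase hl, Multiset.cons_bind, ← Multiset.cons_erase hal,
      Multiset.cons_add, Multiset.cons_le_cons_iff] at hle
    exact le_add_self.trans hle
  · exact hasDisjointWZeroSubsums_of_le_card B (Nat.sub_le _ _) hB
      ((Multiset.le_cons_of_notMem ha).1 hle)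

theorem HasDisjointWZeroSubsums.of_add {Y : Multiset G}
    (h : HasDisjointWZeroSubsums W (S + Y) n) :
    HasDisjointWZeroSubsums W S (n - Multiset.card Y) := by
  classical
  induction Y using Multiset.induction generalizing n with
  | empty => simpa using h
  | cons a Y ih =>
    rw [Multiset.add_cons] at h
    simpa [Nat.sub_sub, add_comm] using ih h.of_cons

theorem HasDisjointWZeroSubsums.of_map_injective {S : Multiset K} {f : K →+ G}
    (hf : Function.Injective f) (h : HasDisjointWZeroSubsums W (S.map f) n) :
    HasDisjointWZeroSubsums W S n := by
  obtain ⟨B, rfl, hB, hle⟩ := hasDisjointWZeroSubsums_iff.1 h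
  set g := Function.invFun f
  have hfg : ∀ l ∈ B, mapElems (f ∘ g) l = l := fun l hl => mapElems_eq_self fun x hx => by
    obtain ⟨y, -, rfl⟩ :=
      Multiset.mem_map.1 (Multiset.mem_of_le hle (Multiset.mem_bind.2 ⟨l, hl, hx⟩))
    exact Function.invFun_eq ⟨y, rfl⟩
  refine hasDisjointWZeroSubsums_of_le_card (B.map (mapElems g)) (by simp) ?_ ?_
  · simp only [Multiset.mem_map]
    rintro _ ⟨l, hl, rfl⟩
    refine (hB l hl).mapElems (hf ?_)
    rw [← wsum_mapElems, mapElems_mapElems, hfg l hl, (hB l hl).2.2, map_zero]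
  · calc (B.map (mapElems g)).bind elems = (B.bind elems).map g := by
          simp [Multiset.bind_map, elems_mapElems, Multiset.map_bind]
      _ ≤ (S.map f).map g := Multiset.map_le_map hle
      _ = S := by rw [Multiset.map_map, (Function.leftInverse_invFun hf).id, Multiset.map_id]

theorem HasDisjointWZeroSubsums.of_filter_ne_zero [DecidableEq G] (hW : W.Nonempty)
    (h : HasDisjointWZeroSubsums W (S.filter (· ≠ 0)) n) :
    HasDisjointWZeroSubsums W S (n + S.count 0) := by
  obtain ⟨w, hw⟩ := hW
  obtain ⟨B, rfl, hB, hle⟩ := hasDisjointWZeroSubsums_iff.1 h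
  refine hasDisjointWZeroSubsums_of_le_card (B + Multiset.replicate (S.count 0) [(w, 0)])
    (by simp) ?_ ?_
  · simp only [Multiset.mem_add, Multiset.mem_replicate]
    rintro l (hl | ⟨-, rfl⟩)
    · exact hB l hl
    · exact ⟨List.cons_ne_nil _ _, by simp [hw], by simp [wsum]⟩
  · calc (B + Multiset.replicate (S.count 0) [(w, 0)]).bind elems
        = B.bind elems + S.filter (· = 0) := by
          simp [Multiset.bind, Multiset.join, elems, Multiset.filter_eq', Multiset.nsmul_singleton]
      _ ≤ S.filter (· ≠ 0) + S.filter (· = 0) := add_le_add_left hle _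
      _ = S := by rw [add_comm]; exact Multiset.filter_add_not _ S

theorem hasDisjointWZeroSubsums_filter_ne_zero_map [DecidableEq K] (f : G →+ K)
    (B : Multiset (List (ℤ × G)))
    (hB : ∀ l ∈ B, IsWZeroSum W l ∧ ∃ x ∈ elems l, f x ≠ 0)
    (hle : B.bind elems ≤ S) :
    HasDisjointWZeroSubsums W ((S.map f).filter (· ≠ 0)) (Multiset.card B) := by
  refine hasDisjointWZeroSubsums_of_le_card
    (B.map fun l => (mapElems f l).filter fun p => p.2 ≠ 0) (by simp) ?_ ?_
  · simp only [Multiset.mem_map]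
    rintro _ ⟨l, hl, rfl⟩
    obtain ⟨hl0, x, hx, hfx⟩ := hB l hl
    refine (hl0.mapElems ?_).filter_ne_zero ⟨f x, ?_, hfx⟩
    · rw [wsum_mapElems, hl0.2.2, map_zero]
    · rw [elems_mapElems]
      exact Multiset.mem_map_of_mem f hx
  · calc (B.map fun l => (mapElems f l).filter fun p => p.2 ≠ 0).bind elems
        = ((B.bind elems).map f).filter (· ≠ 0) := by
          simp_rw [Multiset.bind_map, elems_filter_ne_zero, elems_mapElems, Multiset.map_bind,
            Multiset.filter_bind]
      _ ≤ (S.map f).filter (· ≠ 0) := Multiset.filter_le_filter _ (Multiset.map_le_map hle)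

theorem exists_exponent_le_count [Fintype G] [DecidableEq G]
    (hS : Fintype.card G * AddMonoid.exponent G ≤ Multiset.card S) :
    ∃ g, AddMonoid.exponent G ≤ S.count g := by
  obtain ⟨g, -, hg⟩ := Finset.exists_le_of_sum_le Finset.univ_nonempty
    (f := fun _ => AddMonoid.exponent G) (g := S.count)
    (by simpa [Multiset.sum_count_eq_card] using hS)
  exact ⟨g, hg⟩

theorem hasDisjointWZeroSubsums_of_card_le [Fintype G] (hW : W.Nonempty)
    (hS : m * (Fintype.card G * AddMonoid.exponent G) ≤ Multiset.card S) :
    HasDisjointWZeroSubsums W S m := by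
  classical
  obtain ⟨w, hw⟩ := hW
  have he : 0 < AddMonoid.exponent G := AddMonoid.ExponentExists.of_finite.exponent_pos
  have hK : AddMonoid.exponent G ≤ Fintype.card G * AddMonoid.exponent G :=
    Nat.le_mul_of_pos_left _ Fintype.card_pos
  induction m generalizing S with
  | zero => exact hasDisjointWZeroSubsums_of_le_card 0 le_rfl (by simp) (by simp)
  | succ m ih =>
    obtain ⟨g, hg⟩ := exists_exponent_le_count (S := S)
      (le_trans (Nat.le_mul_of_pos_left _ m.succ_pos) hS)
    obtain ⟨S', rfl⟩ := Multiset.le_iff_exists_add.1 (Multiset.le_count_iff_replicate_le.1 hg)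
    obtain ⟨B, rfl, hB, hle⟩ := hasDisjointWZeroSubsums_iff.1 (ih (S := S') (by
      rw [Multiset.card_add, Multiset.card_replicate, Nat.succ_mul] at hS
      omega))
    refine hasDisjointWZeroSubsums_of_le_card
      (List.replicate (AddMonoid.exponent G) (w, g) ::ₘ B) (by simp) ?_ ?_
    · intro l hl
      rcases Multiset.mem_cons.1 hl with rfl | hl
      · refine ⟨by simpa using he.ne', by simp [List.mem_replicate, hw], ?_⟩
        simp [wsum, smul_comm _ w g, AddMonoid.exponent_nsmul_eq_zero]
      · exact hB l hl
    · rw [Multiset.cons_bind]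
      exact add_le_add (by simp [elems, Multiset.coe_replicate]) hle

-- Finiteness makes the set defining `DW` nonempty; otherwise `DW = sInf ∅ = 0`.
theorem card_lt_DW [Fintype G] (hW : W.Nonempty) (h : ¬ HasDisjointWZeroSubsums W S m) :
    Multiset.card S < DW W G m := by
  have hne :
      {n | ∀ S : Multiset G, n ≤ Multiset.card S → HasDisjointWZeroSubsums W S m}.Nonempty :=
    ⟨_, fun _ => hasDisjointWZeroSubsums_of_card_le hW⟩
  by_contra! hS
  exact h (Nat.sInf_mem hne S hS)

variable (W G) in
theorem exists_DW_le_card_add_one_not_hasDisjointWZeroSubsums (hm : 1 ≤ m) :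
    ∃ S : Multiset G, DW W G m ≤ Multiset.card S + 1 ∧ ¬ HasDisjointWZeroSubsums W S m := by
  by_contra! h
  have hDW : DW W G m ≤ DW W G m - 1 := Nat.sInf_le fun S hS => h S (by omega)
  exact not_hasDisjointWZeroSubsums_zero hm (h 0 (by simp; omega))

end Disjoint

section Subgroup

variable {G : Type*} [AddCommGroup G] {W : Set ℤ} (H : AddSubgroup G) {S₁ : Multiset H}
  {T : Multiset G} (B : Multiset (List (ℤ × G)))

theorem hasDisjointWZeroSubsums_of_bind_elems_le_subgroup [DecidablePred (· ∈ H)]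
    (hB : ∀ l ∈ B, IsWZeroSum W l) (hBH : ∀ x ∈ B.bind elems, x ∈ H)
    (hle : B.bind elems ≤ S₁.map H.subtype + T) :
    HasDisjointWZeroSubsums W S₁ (Multiset.card B - Multiset.card (T.filter (· ∈ H))) := by
  refine (HasDisjointWZeroSubsums.of_add ?_).of_map_injective H.subtype_injective
  refine hasDisjointWZeroSubsums_of_le_card B le_rfl hB ?_
  calc B.bind elems = (B.bind elems).filter (· ∈ H) := (Multiset.filter_eq_self.2 hBH).symm
    _ ≤ (S₁.map H.subtype + T).filter (· ∈ H) := Multiset.filter_le_filter _ hle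
    _ = S₁.map H.subtype + T.filter (· ∈ H) := by
      rw [Multiset.filter_add, Multiset.filter_eq_self.2 fun x hx => ?_]
      obtain ⟨y, -, rfl⟩ := Multiset.mem_map.1 hx
      exact y.2

theorem hasDisjointWZeroSubsums_map_mk_of_bind_elems_le [DecidablePred (· ∈ H)]
    (hW : W.Nonempty) (hB : ∀ l ∈ B, IsWZeroSum W l ∧ ∃ x ∈ elems l, x ∉ H)
    (hle : B.bind elems ≤ S₁.map H.subtype + T) :
    HasDisjointWZeroSubsums W (T.map (QuotientAddGroup.mk' H))
      (Multiset.card B + Multiset.card (T.filter (· ∈ H))) := by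
  classical
  set π := QuotientAddGroup.mk' H
  have hcount : Multiset.card (T.filter (· ∈ H)) = (T.map π).count 0 := by
    rw [Multiset.count_map]
    exact congrArg _ (Multiset.filter_congr fun x _ =>
      (QuotientAddGroup.eq_zero_iff x).symm.trans eq_comm)
  have hS₁ : ((S₁.map H.subtype).map π).filter (· ≠ 0) = 0 :=
    Multiset.filter_eq_nil.2 fun a ha => by
      obtain ⟨y, -, rfl⟩ : ∃ y ∈ S₁, π y = a := by simpa using ha
      simp [π]
  have h := hasDisjointWZeroSubsums_filter_ne_zero_map (W := W) π B (fun l hl => ?_) hle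
  · rw [Multiset.map_add, Multiset.filter_add, hS₁, zero_add] at h
    rw [hcount]
    exact h.of_filter_ne_zero hW
  · obtain ⟨hl, x, hx, hxH⟩ := hB l hl
    exact ⟨hl, x, hx, mt (QuotientAddGroup.eq_zero_iff x).1 hxH⟩

theorem not_hasDisjointWZeroSubsums_map_subtype_add (hW : W.Nonempty) {m m₁ m₂ : ℕ}
    (h₁ : ¬ HasDisjointWZeroSubsums W S₁ m₁)
    (h₂ : ¬ HasDisjointWZeroSubsums W (T.map (QuotientAddGroup.mk' H)) m₂)
    (hm : m₁ + m₂ ≤ m + 1) :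
    ¬ HasDisjointWZeroSubsums W (S₁.map H.subtype + T) m := by
  classical
  intro h
  obtain ⟨B, rfl, hB, hle⟩ := hasDisjointWZeroSubsums_iff.1 h
  set P : List (ℤ × G) → Prop := fun l => ∀ x ∈ elems l, x ∈ H
  have hsplit :
      (B.filter P).bind elems + (B.filter (¬ P ·)).bind elems ≤ S₁.map H.subtype + T := by
    rwa [← Multiset.add_bind, Multiset.filter_add_not]
  have hin := hasDisjointWZeroSubsums_of_bind_elems_le_subgroup H (B.filter P)
    (fun l hl => hB l (Multiset.mem_of_mem_filter hl))
    (fun x hx => by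
      obtain ⟨l, hl, hx⟩ := Multiset.mem_bind.1 hx
      exact (Multiset.mem_filter.1 hl).2 x hx)
    (le_self_add.trans hsplit)
  have hout := hasDisjointWZeroSubsums_map_mk_of_bind_elems_le H (B.filter (¬ P ·)) hW
    (fun l hl => by
      obtain ⟨hl, hP⟩ := Multiset.mem_filter.1 hl
      obtain ⟨x, hx, hxH⟩ := not_forall₂.1 hP
      exact ⟨hB l hl, x, hx, hxH⟩)
    (le_add_self.trans hsplit)
  have hcard :
      Multiset.card B = Multiset.card (B.filter P) + Multiset.card (B.filter (¬ P ·)) := by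
    rw [← Multiset.card_add, Multiset.filter_add_not]
  have := lt_of_not_hasDisjointWZeroSubsums h₁ hin
  have := lt_of_not_hasDisjointWZeroSubsums h₂ hout
  omega

end Subgroup

/-- for `m ≥ m₁ + m₂ - 1`,
`D_{W,m}(G) ≥ D_{W,m₁}(H) + D_{W,m₂}(G/H) - 1`. -/
theorem stmt5 {G : Type*} [AddCommGroup G] [Fintype G] (W : Set ℤ) (hW : W.Nonempty)
    (H : AddSubgroup G) (m m₁ m₂ : ℕ) (hm₁ : 1 ≤ m₁) (hm₂ : 1 ≤ m₂)
    (hm : m₁ + m₂ ≤ m + 1) :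
    DW W (↥H) m₁ + DW W (G ⧸ H) m₂ ≤ DW W G m + 1 := by
  obtain ⟨S₁, hS₁, h₁⟩ := exists_DW_le_card_add_one_not_hasDisjointWZeroSubsums (↥H) W hm₁
  obtain ⟨S₂, hS₂, h₂⟩ := exists_DW_le_card_add_one_not_hasDisjointWZeroSubsums (G ⧸ H) W hm₂
  have hlift : (S₂.map Quotient.out).map (QuotientAddGroup.mk' H) = S₂ := by
    rw [Multiset.map_map]
    exact (Multiset.map_congr rfl fun q _ => Quotient.out_eq' q).trans S₂.map_id
  have h := card_lt_DW hW
    (not_hasDisjointWZeroSubsums_map_subtype_add H hW h₁ (hlift ▸ h₂) hm)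
  simp only [Multiset.card_add, Multiset.card_map] at h
  omega
end

section
/- Let G be a finite abelian group, H a subgroup of G, d₁, d₂ ≥ 1 integers, and let W ⊆ ℤ be a nonempty set of weights that is multiplicatively closed modulo exp(G). Then (1) s_{W,≤d₁d₂}(G) ≤ d₂·(s_{W,≤d₁}(H) − 1) + s_{W,≤d₂}(G/H), and (2) s_{W,{d₁d₂}}(G) ≤ d₂·(s_{W,{d₁}}(H) − 1) + s_{W,{d₂}}(G/H) (in each case with the convention that the right-hand side is ∞ if one of its terms is ∞). -/
open scoped BigOperators

/-!
Let `n₁ = s_{W,L₁}(H)` and `n₂ = s_{W,L₂}(G/H)`, where every length in `L₂` is at most `d₂`. From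
a sequence `S` over `G` of length `d₂ (n₁ - 1) + n₂`, repeatedly extracting zero-subsums of the
image of `S` in `G/H` yields `n₁` disjoint subsequences of `S` whose weighted sums `σ₁, …, σ_{n₁}`
lie in `H`. A `W`-weighted zero-subsum `∑ uᵢ σᵢ` of these, of length in `L₁`, is itself a
`W`-weighted zero-subsum of `S` once each `uᵢ` is multiplied into the weights of its block: this is
where `W` being multiplicatively closed modulo `exp(G)` enters. Its length is a sum of `L₂`-lengths
indexed by an `L₁`-length, which lies in `L = {1, …, d₁d₂}` resp. `{d₁d₂}`.
-/

section WeightedSum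

variable {A B : Type*} [AddCommGroup A] [AddCommGroup B]

def weightedSum (l : List (ℤ × A)) : A := (l.map fun p => p.1 • p.2).sum

@[simp] lemma weightedSum_nil : weightedSum ([] : List (ℤ × A)) = 0 := rfl

@[simp] lemma weightedSum_cons (p : ℤ × A) (l : List (ℤ × A)) :
    weightedSum (p :: l) = p.1 • p.2 + weightedSum l := List.sum_cons

@[simp] lemma weightedSum_append (l l' : List (ℤ × A)) :
    weightedSum (l ++ l') = weightedSum l + weightedSum l' := by
  simp [weightedSum]

lemma map_weightedSum (φ : A →+ B) (l : List (ℤ × A)) :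
    φ (weightedSum l) = weightedSum (l.map (Prod.map id φ)) := by
  induction l with
  | nil => simp
  | cons p l ih => simp [ih]

end WeightedSum

section Lists

variable {α β γ : Type*}

lemma Multiset.bind_mono_left (f : α → Multiset β) {s t : Multiset α} (h : s ≤ t) :
    s.bind f ≤ t.bind f := by
  obtain ⟨u, rfl⟩ := Multiset.le_iff_exists_add.mp h
  rw [Multiset.add_bind]
  exact le_self_add

lemma coe_flatten_map_le_of_le (f : α → β) {M N : List (List α)}
    (h : (M : Multiset (List α)) ≤ N) :
    (↑(M.flatten.map f) : Multiset β) ≤ ↑(N.flatten.map f) := by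
  simp only [List.map_flatten, ← List.flatMap_def, ← Multiset.coe_bind]
  exact Multiset.bind_mono_left _ h

lemma exists_map_prodMap_eq_of_coe_le_map (f : α → β) :
    ∀ {l : List (γ × β)} {S : Multiset α}, (↑(l.map Prod.snd) : Multiset β) ≤ S.map f →
      ∃ l' : List (γ × α), l'.map (Prod.map id f) = l ∧ (↑(l'.map Prod.snd) : Multiset α) ≤ S
  | [], _, _ => ⟨[], rfl, by simp⟩
  | (c, b) :: l, S, h => by
    obtain ⟨a, haS, rfl⟩ := Multiset.mem_map.mp (Multiset.mem_of_le h (a := b) (by simp))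
    obtain ⟨S', rfl⟩ := Multiset.exists_cons_of_mem haS
    rw [Multiset.map_cons, List.map_cons, ← Multiset.cons_coe, Multiset.cons_le_cons_iff] at h
    obtain ⟨l', rfl, hl'⟩ := exists_map_prodMap_eq_of_coe_le_map f h
    exact ⟨(c, a) :: l', rfl, by simpa [← Multiset.cons_coe] using hl'⟩

end Lists

section Subsums

variable {A B : Type*} [AddCommGroup A] [AddCommGroup B] {W : Set ℤ} {L : Set ℕ}

lemma HasWZeroSubsumLen.map (φ : A →+ B) {S : Multiset A} (h : HasWZeroSubsumLen W S L) :
    HasWZeroSubsumLen W (S.map φ) L := by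
  obtain ⟨l, ⟨hne, hW, hS, hsum⟩, hlen⟩ := h
  refine ⟨l.map (Prod.map id φ), ⟨by simpa using hne, List.forall_mem_map.mpr hW, ?_, ?_⟩,
    by simpa using hlen⟩
  · simpa [Function.comp_def] using Multiset.map_le_map (f := φ) hS
  · change weightedSum _ = 0
    rw [← map_weightedSum, show weightedSum l = 0 from hsum, map_zero]

lemma HasWZeroSubsumLen.exists_lift (φ : A →+ B) {S : Multiset A}
    (h : HasWZeroSubsumLen W (S.map φ) L) :
    ∃ l : List (ℤ × A), l ≠ [] ∧ (∀ p ∈ l, p.1 ∈ W) ∧ (↑(l.map Prod.snd) : Multiset A) ≤ S ∧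
      weightedSum l ∈ φ.ker ∧ l.length ∈ L := by
  obtain ⟨l, ⟨hne, hW, hS, hsum⟩, hlen⟩ := h
  obtain ⟨l', rfl, hl'⟩ := exists_map_prodMap_eq_of_coe_le_map φ hS
  refine ⟨l', by simpa using hne, fun p hp => hW _ (List.mem_map_of_mem hp), hl', ?_,
    by simpa using hlen⟩
  rw [AddMonoidHom.mem_ker, map_weightedSum]
  exact hsum

lemma AddSubgroup.hasWZeroSubsumLen_of_forall_mem (H : AddSubgroup A) {n : ℕ}
    (h : ∀ T : Multiset H, n ≤ Multiset.card T → HasWZeroSubsumLen W T L)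
    {S : Multiset A} (hS : ∀ g ∈ S, g ∈ H) (hn : n ≤ Multiset.card S) :
    HasWZeroSubsumLen W S L := by
  lift S to Multiset H using hS
  simpa using (h S (by simpa using hn)).map H.subtype

end Subsums

lemma exists_disjoint_of_forall_exists {α β : Type*} (P : List (β × α) → Prop) {d n : ℕ}
    (h : ∀ S : Multiset α, n ≤ Multiset.card S →
      ∃ l, P l ∧ l.length ≤ d ∧ (↑(l.map Prod.snd) : Multiset α) ≤ S) :
    ∀ (k : ℕ) (S : Multiset α), d * k + n ≤ Multiset.card S →
      ∃ ls : List (List (β × α)), ls.length = k + 1 ∧ (∀ l ∈ ls, P l) ∧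
        (↑(ls.flatten.map Prod.snd) : Multiset α) ≤ S
  | 0, S, hS => by
    obtain ⟨l, hP, -, hl⟩ := h S (by omega)
    exact ⟨[l], rfl, by simpa using hP, by simpa using hl⟩
  | k + 1, S, hS => by
    obtain ⟨l, hP, hd, hl⟩ := h S (by rw [Nat.mul_succ] at hS; omega)
    obtain ⟨T, rfl⟩ := Multiset.le_iff_exists_add.mp hl
    obtain ⟨ls, hlen, hPs, hls⟩ := exists_disjoint_of_forall_exists P h k T (by
      rw [Multiset.card_add, Multiset.coe_card, List.length_map, Nat.mul_succ] at hS
      omega)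
    refine ⟨l :: ls, by simp [hlen], by simpa [hP] using hPs, ?_⟩
    rw [List.flatten_cons, List.map_append, ← Multiset.coe_add]
    exact add_le_add_right hls _

section MulClosed

variable {G : Type*} [AddCommGroup G] {W : Set ℤ}

lemma zsmul_eq_zsmul_of_exponent_dvd {a b : ℤ} (h : (AddMonoid.exponent G : ℤ) ∣ a - b)
    (g : G) : a • g = b • g :=
  zsmul_eq_zsmul_iff_modEq.mpr <| (Int.modEq_iff_dvd.mpr h).symm.of_dvd <|
    Int.natCast_dvd_natCast.mpr (AddMonoid.addOrder_dvd_exponent g)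

lemma MulClosedMod.exists_reweight (hmul : MulClosedMod W (AddMonoid.exponent G)) {u : ℤ}
    (hu : u ∈ W) :
    ∀ l : List (ℤ × G), (∀ p ∈ l, p.1 ∈ W) →
      ∃ l' : List (ℤ × G), l'.map Prod.snd = l.map Prod.snd ∧ (∀ p ∈ l', p.1 ∈ W) ∧
        weightedSum l' = u • weightedSum l
  | [], _ => ⟨[], rfl, by simp, by simp⟩
  | (w, g) :: l, hl => by
    obtain ⟨v, hv, hdvd⟩ := hmul u hu w (hl _ List.mem_cons_self)
    obtain ⟨l', hsnd, hW, hsum⟩ :=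
      hmul.exists_reweight hu l fun p hp => hl p (List.mem_cons_of_mem _ hp)
    refine ⟨(v, g) :: l', by simp [hsnd], by simpa [hv] using hW, ?_⟩
    simp [hsum, smul_add, ← zsmul_eq_zsmul_of_exponent_dvd hdvd, mul_smul]

lemma MulClosedMod.exists_weightedSum_flatten (hmul : MulClosedMod W (AddMonoid.exponent G)) :
    ∀ L : List (ℤ × List (ℤ × G)), (∀ p ∈ L, p.1 ∈ W ∧ ∀ q ∈ p.2, q.1 ∈ W) →
      ∃ l : List (ℤ × G), l.map Prod.snd = (L.map Prod.snd).flatten.map Prod.snd ∧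
        (∀ p ∈ l, p.1 ∈ W) ∧ weightedSum l = weightedSum (L.map (Prod.map id weightedSum))
  | [], _ => ⟨[], rfl, by simp, by simp⟩
  | (u, m) :: L, hL => by
    obtain ⟨hu, hm⟩ := hL _ List.mem_cons_self
    obtain ⟨m', hmsnd, hmW, hmsum⟩ := hmul.exists_reweight hu m hm
    obtain ⟨l, hlsnd, hlW, hlsum⟩ :=
      hmul.exists_weightedSum_flatten L fun p hp => hL p (List.mem_cons_of_mem _ hp)
    refine ⟨m' ++ l, by simp [hmsnd, hlsnd], ?_, by simp [hmsum, hlsum]⟩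
    intro p hp
    rcases List.mem_append.mp hp with hp | hp
    exacts [hmW p hp, hlW p hp]

end MulClosed

section Subgroup

variable {G : Type*} [AddCommGroup G] {W : Set ℤ} (H : AddSubgroup G) {L₁ L₂ L : Set ℕ}

lemma hasWZeroSubsumLen_of_disjoint_subsums (hmul : MulClosedMod W (AddMonoid.exponent G))
    (hsum : ∀ ns : List ℕ, ns.length ∈ L₁ → (∀ s ∈ ns, s ∈ L₂) → ns.sum ∈ L) {n₁ : ℕ}
    (h₁ : ∀ T : Multiset H, n₁ ≤ Multiset.card T → HasWZeroSubsumLen W T L₁)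
    {S : Multiset G} {ls : List (List (ℤ × G))} (hn₁ : n₁ ≤ ls.length)
    (hls : ∀ l ∈ ls, l ≠ [] ∧ (∀ p ∈ l, p.1 ∈ W) ∧ weightedSum l ∈ H ∧ l.length ∈ L₂)
    (hS : (↑(ls.flatten.map Prod.snd) : Multiset G) ≤ S) :
    HasWZeroSubsumLen W S L := by
  obtain ⟨l₀, ⟨hne, hW, hsub, hzero⟩, hlen⟩ := H.hasWZeroSubsumLen_of_forall_mem h₁
    (S := ↑(ls.map weightedSum)) (by simpa using fun l hl => (hls l hl).2.2.1) (by simpa using hn₁)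
  obtain ⟨L', rfl, hL'⟩ :=
    exists_map_prodMap_eq_of_coe_le_map weightedSum (S := (ls : Multiset (List (ℤ × G))))
      (by rwa [Multiset.map_coe])
  have hmem : ∀ p ∈ L', p.2 ∈ ls := fun p hp =>
    Multiset.mem_of_le hL' (Multiset.mem_coe.mpr (List.mem_map_of_mem hp))
  obtain ⟨l, hsnd, hlW, hlsum⟩ := hmul.exists_weightedSum_flatten L' fun p hp =>
    ⟨hW _ (List.mem_map_of_mem hp), (hls _ (hmem p hp)).2.1⟩
  refine ⟨l, ⟨?_, hlW, ?_, hlsum.trans hzero⟩, ?_⟩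
  · rintro rfl
    obtain ⟨p, hp⟩ := List.exists_mem_of_ne_nil _ (by simpa using hne)
    have hflat : (L'.map Prod.snd).flatten = [] := List.map_eq_nil_iff.mp hsnd.symm
    exact (hls _ (hmem p hp)).1 (List.flatten_eq_nil_iff.mp hflat _ (List.mem_map_of_mem hp))
  · rw [hsnd]
    exact (coe_flatten_map_le_of_le _ hL').trans hS
  · have hlength : l.length = ((L'.map Prod.snd).map List.length).sum := by
      rw [← List.length_map (f := Prod.snd), hsnd, List.length_map, List.length_flatten]
    rw [hlength]
    refine hsum _ (by simpa using hlen) fun s hs => ?_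
    obtain ⟨m, hm, rfl⟩ := List.mem_map.mp hs
    obtain ⟨p, hp, rfl⟩ := List.mem_map.mp hm
    exact (hls _ (hmem p hp)).2.2.2

theorem hasWZeroSubsumLen_of_le_card (hmul : MulClosedMod W (AddMonoid.exponent G))
    (hsum : ∀ ns : List ℕ, ns.length ∈ L₁ → (∀ s ∈ ns, s ∈ L₂) → ns.sum ∈ L) {d₂ n₁ n₂ : ℕ}
    (hL₂ : ∀ t ∈ L₂, t ≤ d₂)
    (h₁ : ∀ T : Multiset H, n₁ ≤ Multiset.card T → HasWZeroSubsumLen W T L₁)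
    (h₂ : ∀ T : Multiset (G ⧸ H), n₂ ≤ Multiset.card T → HasWZeroSubsumLen W T L₂)
    {S : Multiset G} (hS : d₂ * (n₁ - 1) + n₂ ≤ Multiset.card S) :
    HasWZeroSubsumLen W S L := by
  have hlift : ∀ T : Multiset G, n₂ ≤ Multiset.card T → ∃ l : List (ℤ × G),
      (l ≠ [] ∧ (∀ p ∈ l, p.1 ∈ W) ∧ weightedSum l ∈ H ∧ l.length ∈ L₂) ∧ l.length ≤ d₂ ∧
        (↑(l.map Prod.snd) : Multiset G) ≤ T := by
    intro T hT
    obtain ⟨l, hne, hW, hl, hker, hlen⟩ :=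
      (h₂ (T.map (QuotientAddGroup.mk' H)) (by simpa using hT)).exists_lift
    exact ⟨l, ⟨hne, hW, by simpa using hker, hlen⟩, hL₂ _ hlen, hl⟩
  obtain ⟨ls, hlen, hls, hlsS⟩ := exists_disjoint_of_forall_exists _ hlift (n₁ - 1) S hS
  exact hasWZeroSubsumLen_of_disjoint_subsums H hmul hsum h₁ (by omega) hls hlsS

end Subgroup

section Davenport

variable {A : Type*} [AddCommGroup A] {W : Set ℤ} {L : Set ℕ}

lemma sWL_le_of_forall {n : ℕ}
    (h : ∀ S : Multiset A, n ≤ Multiset.card S → HasWZeroSubsumLen W S L) : sWL W A L ≤ n :=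
  sInf_le ⟨n, rfl, h⟩

lemma exists_eq_sWL_of_ne_top (h : sWL W A L ≠ ⊤) : ∃ n : ℕ, sWL W A L = n ∧
    ∀ S : Multiset A, n ≤ Multiset.card S → HasWZeroSubsumLen W S L := by
  rcases Set.eq_empty_or_nonempty {N : ℕ∞ | ∃ n : ℕ, N = n ∧
      ∀ S : Multiset A, n ≤ Multiset.card S → HasWZeroSubsumLen W S L} with he | hne
  · exact absurd (by rw [sWL, he, sInf_empty]) h
  · exact csInf_mem hne

end Davenport

theorem sWL_le_of_addSubgroup {G : Type*} [AddCommGroup G] {W : Set ℤ}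
    (hmul : MulClosedMod W (AddMonoid.exponent G)) (H : AddSubgroup G) {L₁ L₂ L : Set ℕ}
    (hsum : ∀ ns : List ℕ, ns.length ∈ L₁ → (∀ s ∈ ns, s ∈ L₂) → ns.sum ∈ L) {d₂ : ℕ}
    (hL₂ : ∀ t ∈ L₂, t ≤ d₂) :
    sWL W G L ≤ (d₂ : ℕ∞) * (sWL W H L₁ - 1) + sWL W (G ⧸ H) L₂ := by
  rcases eq_or_ne (sWL W (G ⧸ H) L₂) ⊤ with h₂ | h₂
  · simp [h₂]
  obtain ⟨n₂, e₂, P₂⟩ := exists_eq_sWL_of_ne_top h₂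
  rcases eq_or_ne (sWL W H L₁) ⊤ with h₁ | h₁
  · -- `d₂ * ⊤ = ⊤` needs `d₂ ≠ 0`: a finite `sWL` forces a positive length in `L₂`
    have hd₂ : d₂ ≠ 0 := by
      obtain ⟨l, ⟨hne, -⟩, hlen⟩ := P₂ (Multiset.replicate n₂ 0) (by simp)
      have := hL₂ _ hlen
      have := List.length_pos_iff.mpr hne
      omega
    simp [h₁, hd₂]
  obtain ⟨n₁, e₁, P₁⟩ := exists_eq_sWL_of_ne_top h₁
  rw [e₁, e₂, ← ENat.natCast_one, ← ENat.natCast_sub]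
  exact_mod_cast sWL_le_of_forall fun S hS =>
    hasWZeroSubsumLen_of_le_card H hmul hsum hL₂ P₁ P₂ hS

theorem stmt9_general {G : Type*} [AddCommGroup G] (W : Set ℤ)
    (H : AddSubgroup G) (d₁ d₂ : ℕ)
    (hmul : MulClosedMod W (AddMonoid.exponent G)) :
    sWle W G (d₁ * d₂) ≤ ((d₂ : ℕ) : ℕ∞) * (sWle W (↥H) d₁ - 1) + sWle W (G ⧸ H) d₂ ∧
    sWL W G {d₁ * d₂} ≤ ((d₂ : ℕ) : ℕ∞) * (sWL W (↥H) {d₁} - 1) + sWL W (G ⧸ H) {d₂} := by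
  constructor
  · refine sWL_le_of_addSubgroup hmul H ?_ fun t ht => ht.2
    rintro ns ⟨hlen, hlen'⟩ hns
    obtain ⟨s, hs⟩ := List.exists_mem_of_length_pos hlen
    refine ⟨(hns s hs).1.trans (List.le_sum_of_mem hs), ?_⟩
    calc ns.sum ≤ ns.length • d₂ := List.sum_le_card_nsmul ns d₂ fun s hs => (hns s hs).2
      _ ≤ d₁ * d₂ := Nat.mul_le_mul_right _ hlen'
  · refine sWL_le_of_addSubgroup hmul H ?_ fun t ht => ht.le
    rintro ns rfl hns
    exact List.sum_eq_card_nsmul ns d₂ hns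

/-- for `W` multiplicatively closed modulo `exp(G)` and `d₁, d₂ ≥ 1`:
(1) `s_{W,≤d₁d₂}(G) ≤ d₂(s_{W,≤d₁}(H) - 1) + s_{W,≤d₂}(G/H)`, and
(2) `s_{W,{d₁d₂}}(G) ≤ d₂(s_{W,{d₁}}(H) - 1) + s_{W,{d₂}}(G/H)` (in `ℕ∞`). -/
theorem stmt9 {G : Type*} [AddCommGroup G] [Fintype G] (W : Set ℤ) (hW : W.Nonempty)
    (H : AddSubgroup G) (d₁ d₂ : ℕ) (hd₁ : 1 ≤ d₁) (hd₂ : 1 ≤ d₂)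
    (hmul : MulClosedMod W (AddMonoid.exponent G)) :
    sWle W G (d₁ * d₂) ≤ ((d₂ : ℕ) : ℕ∞) * (sWle W (↥H) d₁ - 1) + sWle W (G ⧸ H) d₂ ∧
    sWL W G {d₁ * d₂} ≤ ((d₂ : ℕ) : ℕ∞) * (sWL W (↥H) {d₁} - 1) + sWL W (G ⧸ H) {d₂} :=
  stmt9_general W H d₁ d₂ hmul
end

section
/- Let p be a prime, d, r ∈ ℕ, and A = {1,…,p−1}. Then s_{A,≤d}(C_p^r) − 1 is equal to the maximum n such that there exists an [n, n−r]_p-code of minimum distance at least d + 1 (when one side is infinite, so is the other). -/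
open scoped BigOperators

/-!
An `A`-weighted zero-subsum of length `t` of a sequence `g₁, …, gₙ` in `V` is the same thing as
a nonzero vector of Hamming weight `t` in the kernel of `c ↦ ∑ cᵢ gᵢ`, since the weights in
`A = {1, …, p - 1}` represent exactly the nonzero residues. So sequences of length `n` without
short weighted zero-subsums are parity-check matrices of codes of minimum distance `≥ d + 1`.
Kernels of maps `𝔽_pⁿ → V` have dimension `≥ n - dim V`, every subspace of dimension
`n - dim V` is such a kernel, and the minimum distance only grows on passing to a subspace;
hence the longest such sequence and the longest such code have the same length, and
`s_{A,≤d}` is one more than it.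
-/

open Module

section LinearAlgebra

variable {F U V : Type*} [Field F] [AddCommGroup U] [Module F U] [FiniteDimensional F U]
  [AddCommGroup V] [Module F V] [FiniteDimensional F V]

lemma Submodule.exists_le_finrank_eq (K : Submodule F U) {k : ℕ} (hk : k ≤ finrank F K) :
    ∃ C ≤ K, finrank F C = k := by
  obtain ⟨f, hf⟩ := (finrank_le_iff_exists_linearMap (R := F) (M := Fin k → F)).1
    (by simpa using hk)
  refine ⟨LinearMap.range (K.subtype ∘ₗ f), ?_, ?_⟩
  · rintro _ ⟨x, rfl⟩
    exact (f x).2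
  · simpa using
      LinearMap.finrank_range_of_inj (f := K.subtype ∘ₗ f) (Subtype.val_injective.comp hf)

lemma exists_finrank_eq_sub_iff_exists_linearMap (P : U → Prop) :
    (∃ C : Submodule F U, finrank F C = finrank F U - finrank F V ∧ ∀ c ∈ C, P c) ↔
      ∃ ψ : U →ₗ[F] V, ∀ c ∈ LinearMap.ker ψ, P c := by
  constructor
  · rintro ⟨C, hC, hP⟩
    have hQ : finrank F (U ⧸ C) ≤ finrank F V := by
      have := C.finrank_quotient_add_finrank
      omega
    obtain ⟨e, he⟩ := (finrank_le_iff_exists_linearMap (R := F)).1 hQ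
    refine ⟨e ∘ₗ C.mkQ, ?_⟩
    rwa [LinearMap.ker_comp_of_ker_eq_bot _ (LinearMap.ker_eq_bot_of_injective he),
      Submodule.ker_mkQ]
  · rintro ⟨ψ, hP⟩
    have hker : finrank F U - finrank F V ≤ finrank F (LinearMap.ker ψ) := by
      have := LinearMap.finrank_range_add_finrank_ker ψ
      have := (LinearMap.range ψ).finrank_le
      omega
    obtain ⟨C, hCK, hC⟩ := (LinearMap.ker ψ).exists_le_finrank_eq hker
    exact ⟨C, hC, fun c hc => hP c (hCK hc)⟩

end LinearAlgebra

lemma Fintype.linearCombination_single_one {R M ι : Type*} [Semiring R] [AddCommMonoid M]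
    [Module R M] [Fintype ι] [DecidableEq ι] (ψ : (ι → R) →ₗ[R] M) :
    Fintype.linearCombination R (fun i => ψ (Pi.single i 1)) = ψ := by
  ext i
  simp

lemma List.exists_map_eq_of_coe_map_snd_le {α β γ : Type*} (g : β → α) :
    ∀ (l : List (γ × α)) (s : Multiset β), (↑(l.map Prod.snd) : Multiset α) ≤ s.map g →
      ∃ q : List (γ × β), q.map (Prod.map id g) = l ∧ (↑(q.map Prod.snd) : Multiset β) ≤ s
  | [], _, _ => ⟨[], rfl, by simp⟩
  | (w, a) :: l, s, hle => by
    classical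
    obtain ⟨b, hb, rfl⟩ := Multiset.mem_map.1 (Multiset.mem_of_le hle (a := a) (by simp))
    rw [← Multiset.cons_erase hb, Multiset.map_cons] at hle
    obtain ⟨q, rfl, hq⟩ := exists_map_eq_of_coe_map_snd_le g l (s.erase b)
      ((Multiset.cons_le_cons_iff _).1 (by simpa using hle))
    refine ⟨(w, b) :: q, rfl, ?_⟩
    exact (Multiset.cons_le_cons b hq).trans_eq (Multiset.cons_erase hb)

section PiSingle

variable {α ι M : Type*} [DecidableEq ι] [AddCommMonoid M] (f : α → ι) (v : α → M)

lemma List.sum_map_pi_single_apply_of_notMem {i : ι} :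
    ∀ {q : List α}, i ∉ q.map f → (q.map fun a => (Pi.single (f a) (v a) : ι → M)).sum i = 0
  | [], _ => rfl
  | a :: q, hi => by
    rw [List.map_cons, List.mem_cons, not_or] at hi
    simp [Ne.symm hi.1, sum_map_pi_single_apply_of_notMem hi.2]

lemma List.sum_map_pi_single_apply_of_nodup :
    ∀ {q : List α}, (q.map f).Nodup → ∀ a ∈ q,
      (q.map fun a => (Pi.single (f a) (v a) : ι → M)).sum (f a) = v a
  | [], _, _, h => absurd h List.not_mem_nil
  | b :: q, hq, a, ha => by
    rw [List.map_cons, List.nodup_cons] at hq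
    rcases List.mem_cons.1 ha with rfl | ha
    · simp [sum_map_pi_single_apply_of_notMem f v hq.1]
    · have hab : f b ≠ f a := fun h => hq.1 (h ▸ List.mem_map_of_mem ha)
      simp [Ne.symm hab, sum_map_pi_single_apply_of_nodup hq.2 a ha]

end PiSingle

namespace ZMod

lemma intCast_ne_zero_of_mem_Icc {p : ℕ} {w : ℤ} (hw : w ∈ Set.Icc 1 ((p : ℤ) - 1)) :
    (w : ZMod p) ≠ 0 := by
  rw [Ne, ZMod.intCast_zmod_eq_zero_iff_dvd]
  intro hdvd
  linarith [hw.2, Int.le_of_dvd (by linarith [hw.1]) hdvd]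

lemma val_mem_Icc_of_ne_zero {p : ℕ} [NeZero p] {x : ZMod p} (hx : x ≠ 0) :
    (x.val : ℤ) ∈ Set.Icc 1 ((p : ℤ) - 1) := by
  have h1 : x.val ≠ 0 := (ZMod.val_ne_zero x).2 hx
  have h2 := ZMod.val_lt x
  constructor <;> omega

end ZMod

lemma not_hasWZeroSubsumLen_zero {G : Type*} [AddCommGroup G] (W : Set ℤ) (L : Set ℕ) :
    ¬ HasWZeroSubsumLen W (0 : Multiset G) L := by
  rintro ⟨l, ⟨hne, -, hle, -⟩, -⟩
  simp_all

section ZeroSubsumKernel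

variable {p : ℕ} {V : Type*} [AddCommGroup V] [Module (ZMod p) V]
  {ι : Type*} [Fintype ι] (g : ι → V) (d : ℕ)

lemma hasWZeroSubsumLen_of_mem_ker [NeZero p] {c : ι → ZMod p}
    (hc : c ∈ LinearMap.ker (Fintype.linearCombination (ZMod p) g)) (hc0 : c ≠ 0)
    (hcd : hammingNorm c ≤ d) :
    HasWZeroSubsumLen (Set.Icc 1 ((p : ℤ) - 1)) (Finset.univ.val.map g) {t | 1 ≤ t ∧ t ≤ d} := by
  set s := Finset.univ.filter fun i => c i ≠ 0
  have hlen : (s.toList.map fun i => (((c i).val : ℤ), g i)).length = hammingNorm c := by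
    simp [s, hammingNorm]
  have hpos := hammingNorm_pos_iff.2 hc0
  refine ⟨s.toList.map fun i => (((c i).val : ℤ), g i), ⟨?_, ?_, ?_, ?_⟩, ?_⟩
  · exact List.ne_nil_of_length_pos (hlen ▸ hpos)
  · simp only [List.mem_map, Finset.mem_toList, forall_exists_index, and_imp]
    rintro _ i hi rfl
    exact ZMod.val_mem_Icc_of_ne_zero (Finset.mem_filter.1 hi).2
  · rw [List.map_map]
    change (↑(s.toList.map g) : Multiset V) ≤ _
    rw [← Multiset.map_coe, Finset.coe_toList]
    exact Multiset.map_le_map (Finset.val_le_iff.2 s.subset_univ)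
  · rw [List.map_map, Function.comp_def, Finset.sum_map_toList]
    calc ∑ i ∈ s, ((c i).val : ℤ) • g i = ∑ i ∈ s, c i • g i :=
          Finset.sum_congr rfl fun i _ => by
            rw [← Int.cast_smul_eq_zsmul (ZMod p), Int.cast_natCast, ZMod.natCast_zmod_val]
      _ = ∑ i, c i • g i := Finset.sum_filter_of_ne fun i _ h hci => h (by simp [hci])
      _ = 0 := hc
  · exact ⟨hlen ▸ hpos, hlen ▸ hcd⟩

lemma exists_mem_ker_of_hasWZeroSubsumLen [DecidableEq ι]
    (h : HasWZeroSubsumLen (Set.Icc 1 ((p : ℤ) - 1)) (Finset.univ.val.map g) {t | 1 ≤ t ∧ t ≤ d}) :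
    ∃ c ∈ LinearMap.ker (Fintype.linearCombination (ZMod p) g), c ≠ 0 ∧ hammingNorm c ≤ d := by
  obtain ⟨l, ⟨hne, hW, hle, hsum⟩, -, hld⟩ := h
  -- lift the terms of `l` to pairwise distinct indices of `g`
  obtain ⟨q, rfl, hq⟩ := List.exists_map_eq_of_coe_map_snd_le g l _ hle
  have hnodup : (q.map Prod.snd).Nodup :=
    Multiset.coe_nodup.1 (Multiset.nodup_of_le hq Finset.univ.nodup)
  set c : ι → ZMod p := (q.map fun a => Pi.single a.2 (a.1 : ZMod p)).sum
  refine ⟨c, ?_, ?_, ?_⟩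
  · rw [LinearMap.mem_ker, ← hsum, map_list_sum, List.map_map, List.map_map]
    congr 1
    refine List.map_congr_left fun a _ => ?_
    simp [Int.cast_smul_eq_zsmul]
  · obtain ⟨a, ha⟩ := List.exists_mem_of_ne_nil q (by simpa using hne)
    intro hc
    have hca : c a.2 = a.1 := List.sum_map_pi_single_apply_of_nodup Prod.snd
      (fun a : ℤ × ι => (a.1 : ZMod p)) hnodup a ha
    rw [hc, Pi.zero_apply] at hca
    exact ZMod.intCast_ne_zero_of_mem_Icc (hW _ (List.mem_map_of_mem ha)) hca.symm
  · calc hammingNorm c ≤ (q.map Prod.snd).toFinset.card := by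
          refine Finset.card_le_card fun i hi => ?_
          rw [List.mem_toFinset]
          by_contra hi'
          exact (Finset.mem_filter.1 hi).2 (List.sum_map_pi_single_apply_of_notMem _ _ hi')
      _ ≤ d := (List.toFinset_card_le _).trans (by simpa using hld)

lemma not_hasWZeroSubsumLen_iff [NeZero p] [DecidableEq ι] :
    ¬ HasWZeroSubsumLen (Set.Icc 1 ((p : ℤ) - 1)) (Finset.univ.val.map g) {t | 1 ≤ t ∧ t ≤ d} ↔
      ∀ c ∈ LinearMap.ker (Fintype.linearCombination (ZMod p) g),
        c ≠ 0 → d + 1 ≤ hammingNorm c := by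
  constructor
  · intro h c hc hc0
    by_contra! hcd
    exact h (hasWZeroSubsumLen_of_mem_ker g d hc hc0 (Nat.le_of_lt_succ hcd))
  · intro h hsub
    obtain ⟨c, hc, hc0, hcd⟩ := exists_mem_ker_of_hasWZeroSubsumLen g d hsub
    have := h c hc hc0
    omega

end ZeroSubsumKernel

lemma Multiset.exists_card_eq_iff_exists_fin {α : Type*} (Q : Multiset α → Prop) (n : ℕ) :
    (∃ S : Multiset α, card S = n ∧ Q S) ↔ ∃ g : Fin n → α, Q (Finset.univ.val.map g) := by
  constructor
  · rintro ⟨⟨l⟩, rfl, hQ⟩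
    refine ⟨l.get, ?_⟩
    rwa [← List.ofFn_get l, List.ofFn_eq_map] at hQ
  · rintro ⟨g, hQ⟩
    exact ⟨_, by simp, hQ⟩

lemma exists_not_hasWZeroSubsumLen_iff_exists_code {p : ℕ} [Fact p.Prime] {V : Type*}
    [AddCommGroup V] [Module (ZMod p) V] [FiniteDimensional (ZMod p) V] (n d : ℕ) :
    (∃ S : Multiset V, Multiset.card S = n ∧
        ¬ HasWZeroSubsumLen (Set.Icc 1 ((p : ℤ) - 1)) S {t | 1 ≤ t ∧ t ≤ d}) ↔
      ∃ C : Submodule (ZMod p) (Fin n → ZMod p), finrank (ZMod p) C = n - finrank (ZMod p) V ∧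
        ∀ c ∈ C, c ≠ 0 → d + 1 ≤ hammingNorm c := by
  have hker := exists_finrank_eq_sub_iff_exists_linearMap (F := ZMod p) (U := Fin n → ZMod p)
    (V := V) fun c => c ≠ 0 → d + 1 ≤ hammingNorm c
  rw [Module.finrank_fin_fun] at hker
  rw [Multiset.exists_card_eq_iff_exists_fin, hker]
  simp_rw [not_hasWZeroSubsumLen_iff]
  constructor
  · rintro ⟨g, hg⟩
    exact ⟨_, hg⟩
  · rintro ⟨ψ, hψ⟩
    exact ⟨fun i => ψ (Pi.single i 1), by rwa [Fintype.linearCombination_single_one]⟩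

lemma ENat.sInf_threshold_eq_sSup_add_one {α : Type*} (f : α → ℕ) (Q : α → Prop)
    (hQ : ∃ a, ¬ Q a) :
    sInf {N : ℕ∞ | ∃ n : ℕ, N = n ∧ ∀ a, n ≤ f a → Q a} =
      sSup {N : ℕ∞ | ∃ n : ℕ, N = n ∧ ∃ a, f a = n ∧ ¬ Q a} + 1 := by
  set T := {N : ℕ∞ | ∃ n : ℕ, N = n ∧ ∃ a, f a = n ∧ ¬ Q a}
  have hT : ∀ a, ¬ Q a → (f a : ℕ∞) ≤ sSup T := fun a ha => le_sSup ⟨f a, rfl, a, rfl, ha⟩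
  apply le_antisymm
  · rcases eq_top_or_lt_top (sSup T) with htop | hlt
    · rw [htop, top_add]
      exact le_top
    lift sSup T to ℕ using hlt.ne with M hM
    refine sInf_le ⟨M + 1, by simp, fun a ha => ?_⟩
    by_contra hna
    have := hT a hna
    norm_cast at this
    omega
  · refine le_sInf ?_
    rintro _ ⟨n, rfl, hn⟩
    obtain ⟨a₀, ha₀⟩ := hQ
    have hlt : ∀ a, ¬ Q a → f a < n := fun a ha => by
      by_contra! h
      exact ha (hn a h)
    have hle : sSup T ≤ (n - 1 : ℕ) := by
      refine sSup_le ?_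
      rintro _ ⟨m, rfl, a, rfl, ha⟩
      have := hlt a ha
      exact_mod_cast (by omega : f a ≤ n - 1)
    have := hlt a₀ ha₀
    calc sSup T + 1 ≤ ((n - 1 : ℕ) : ℕ∞) + 1 := by gcongr
      _ = n := by norm_cast; omega

theorem stmt13_general (p : ℕ) (hp : p.Prime) (d r : ℕ) :
    sWle (Set.Icc 1 ((p : ℤ) - 1)) (Fin r → ZMod p) d =
      sSup {N : ℕ∞ | ∃ n : ℕ, N = (n : ℕ∞) ∧
        ∃ C : Submodule (ZMod p) (Fin n → ZMod p),
          Module.finrank (ZMod p) C = n - r ∧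
          ∀ c ∈ C, c ≠ 0 → d + 1 ≤ hammingNorm c} + 1 := by
  have : Fact p.Prime := ⟨hp⟩
  have hcodes :=
    exists_not_hasWZeroSubsumLen_iff_exists_code (p := p) (V := Fin r → ZMod p) (d := d)
  simp only [Module.finrank_fin_fun] at hcodes
  rw [sWle, sWL, ENat.sInf_threshold_eq_sSup_add_one Multiset.card _
    ⟨0, not_hasWZeroSubsumLen_zero _ _⟩]
  simp_rw [hcodes]

/-- `s_{A,≤d}(C_p^r) - 1` equals the maximal `n` such that there
exists an `[n, n-r]_p`-code of minimum distance at least `d+1`; phrased in `ℕ∞`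
as `s_{A,≤d}(C_p^r) = (sup of such n) + 1`, which also covers the infinite case. -/
theorem stmt13 (p : ℕ) (hp : p.Prime) (d r : ℕ) (hd : 1 ≤ d) (hr : 1 ≤ r) :
    sWle (Set.Icc 1 ((p : ℤ) - 1)) (Fin r → ZMod p) d =
      sSup {N : ℕ∞ | ∃ n : ℕ, N = (n : ℕ∞) ∧
        ∃ C : Submodule (ZMod p) (Fin n → ZMod p),
          Module.finrank (ZMod p) C = n - r ∧
          ∀ c ∈ C, c ≠ 0 → d + 1 ≤ hammingNorm c} + 1 :=
  stmt13_general p hp d r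
end
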